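/- Let (b₁,b₂) ∈ B with b₃ = (b₁b₂)^(−1), and assume b₁ ≤ 2b₂ − b₃ (so (b₁,b₂) lies in B_I, the existence region of the type-I Riemann ellipsoids). Then (x²−y²)·D(x,y,z) ≠ 0 both for (x,y,z) = (b₁,b₃,b₂) and for (x,y,z) = (b₃,b₁,b₂), and the four numbers G^R₊(b₁,b₃,b₂), G^R₋(b₁,b₃,b₂), G^R₊(b₃,b₁,b₂), G^R₋(b₃,b₁,b₂) are all nonnegative; consequently the quantities N^R₊(x,y,z) = ½(√(G^R₊(x,y,z)) + √(G^R₋(x,y,z))) and N^R₋(x,y,z) = ½(√(G^R₊(x,y,z)) − √(G^R₋(x,y,z))), which define the momenta of the type-I ellipsoids, are well-defined real numbers at both argument triples. -/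

import Mathlib

open Real MeasureTheory

/-- `C₁(x,y,z) = 2πg ∫₀^∞ s·((s+x²)(s+y²)(s+z²))^(−3/2) ds`. -/
noncomputable def riC1 (g x y z : ℝ) : ℝ :=
  2 * π * g * ∫ s in Set.Ioi (0:ℝ),
    s * ((s + x ^ 2) * (s + y ^ 2) * (s + z ^ 2)) ^ (-(3:ℝ)/2)

/-- `C₂(x,y,z) = 2πg ∫₀^∞ s²·((s+x²)(s+y²)(s+z²))^(−3/2) ds`. -/
noncomputable def riC2 (g x y z : ℝ) : ℝ :=
  2 * π * g * ∫ s in Set.Ioi (0:ℝ),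
    s ^ 2 * ((s + x ^ 2) * (s + y ^ 2) * (s + z ^ 2)) ^ (-(3:ℝ)/2)

/-- `G(x,y,z) = x²(y²−z²)C₁ + (y²−4z²)(z²C₁ + C₂)`. -/
noncomputable def Gfun (g x y z : ℝ) : ℝ :=
  x ^ 2 * (y ^ 2 - z ^ 2) * riC1 g x y z
    + (y ^ 2 - 4 * z ^ 2) * (z ^ 2 * riC1 g x y z + riC2 g x y z)

/-- `D(x,y,z) = x²(y²−z²) + z²(4z²−y²)`. -/
def Dfun (x y z : ℝ) : ℝ := x ^ 2 * (y ^ 2 - z ^ 2) + z ^ 2 * (4 * z ^ 2 - y ^ 2)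

/-- `G^R₊(x,y,z)`. -/
noncomputable def GRp (g x y z : ℝ) : ℝ :=
  (y - z) ^ 4 * (x ^ 2 - (y + 2 * z) ^ 2) *
    ((x ^ 2 - z ^ 2) * Gfun g x y z) / ((x ^ 2 - y ^ 2) * Dfun x y z)

/-- `G^R₋(x,y,z)`. -/
noncomputable def GRm (g x y z : ℝ) : ℝ :=
  (y + z) ^ 4 * (x ^ 2 - (y - 2 * z) ^ 2) *
    ((x ^ 2 - z ^ 2) * Gfun g x y z) / ((x ^ 2 - y ^ 2) * Dfun x y z)

/-- `N^R₊(x,y,z) = ½(√G^R₊ + √G^R₋)`. -/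
noncomputable def NRp (g x y z : ℝ) : ℝ :=
  (Real.sqrt (GRp g x y z) + Real.sqrt (GRm g x y z)) / 2

/-- `N^R₋(x,y,z) = ½(√G^R₊ − √G^R₋)`. -/
noncomputable def NRm (g x y z : ℝ) : ℝ :=
  (Real.sqrt (GRp g x y z) - Real.sqrt (GRm g x y z)) / 2

/-- Membership in `B = {(b₁,b₂) : b₁ > b₂ > b₁^(−1/2) > 0}`. -/
def memB (b1 b2 : ℝ) : Prop := b2 < b1 ∧ (Real.sqrt b1)⁻¹ < b2 ∧ 0 < (Real.sqrt b1)⁻¹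

/-!
Since `C₁, C₂ ≥ 0`, writing `G = (x²(y²−z²) + z²(y²−4z²))·C₁ + (y²−4z²)·C₂` shows `G ≤ 0` as soon as
both coefficients are nonpositive. At `(b₁,b₃,b₂)` this is immediate from `b₃ < b₂`; at
`(b₃,b₁,b₂)` it is where `b₃ ≤ 2b₂ − b₁` enters, through the cubic inequality
`(2z−y)²(y²−z²) ≤ z²(4z²−y²)` for `z ≤ y ≤ 2z`. `D` is symmetric in its first two arguments and
positive because `b₂ < b₁ < 2b₂`. Finally `G^R±` is a fourth power times `x² − (y ± 2z)² ≤ 0`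
times `G/D ≤ 0` times `(x²−z²)/(x²−y²) ≥ 0`.
-/

section

variable {g x y z : ℝ}

lemma riC1_nonneg (hg : 0 ≤ g) : 0 ≤ riC1 g x y z :=
  mul_nonneg (by positivity) <| setIntegral_nonneg measurableSet_Ioi fun s (hs : 0 < s) => by
    positivity

lemma riC2_nonneg (hg : 0 ≤ g) : 0 ≤ riC2 g x y z :=
  mul_nonneg (by positivity) <| setIntegral_nonneg measurableSet_Ioi fun s (hs : 0 < s) => by
    positivity

lemma Gfun_eq : Gfun g x y z =
    (x ^ 2 * (y ^ 2 - z ^ 2) + z ^ 2 * (y ^ 2 - 4 * z ^ 2)) * riC1 g x y z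
      + (y ^ 2 - 4 * z ^ 2) * riC2 g x y z := by
  unfold Gfun; ring

lemma Gfun_nonpos (hg : 0 ≤ g)
    (h₁ : x ^ 2 * (y ^ 2 - z ^ 2) + z ^ 2 * (y ^ 2 - 4 * z ^ 2) ≤ 0)
    (h₂ : y ^ 2 - 4 * z ^ 2 ≤ 0) : Gfun g x y z ≤ 0 := by
  rw [Gfun_eq]
  exact add_nonpos (mul_nonpos_of_nonpos_of_nonneg h₁ (riC1_nonneg hg))
    (mul_nonpos_of_nonpos_of_nonneg h₂ (riC2_nonneg hg))

lemma Gfun_nonpos_of_sq_le (hg : 0 ≤ g) (hyz : y ^ 2 ≤ z ^ 2) : Gfun g x y z ≤ 0 :=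
  Gfun_nonpos hg (by nlinarith [sq_nonneg x, sq_nonneg z]) (by nlinarith [sq_nonneg z])

lemma sq_two_mul_sub_mul_le (hzy : z ≤ y) (hy : y ≤ 2 * z) :
    (2 * z - y) ^ 2 * (y ^ 2 - z ^ 2) ≤ z ^ 2 * (4 * z ^ 2 - y ^ 2) := by
  have hz : 0 ≤ z := by linarith
  -- the difference is `(2z - y) * (y²(y - 2z) + 4z³)`, and `y²(y - 2z) ≥ -zy² ≥ -4z³`
  have h : 0 ≤ y ^ 2 * (y - 2 * z) + 4 * z ^ 3 := by
    nlinarith [mul_le_mul_of_nonneg_left (show -z ≤ y - 2 * z by linarith) (sq_nonneg y),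
      mul_le_mul_of_nonneg_left (show y ^ 2 ≤ (2 * z) ^ 2 by nlinarith) hz]
  nlinarith [mul_nonneg (show 0 ≤ 2 * z - y by linarith) h]

lemma Gfun_nonpos_of_le_two_mul_sub (hg : 0 ≤ g) (hx : 0 ≤ x) (hzy : z ≤ y)
    (hxy : x ≤ 2 * z - y) : Gfun g x y z ≤ 0 := by
  have hy : y ≤ 2 * z := by linarith
  have hx2 : x ^ 2 ≤ (2 * z - y) ^ 2 := pow_le_pow_left₀ hx hxy 2
  refine Gfun_nonpos hg ?_ (by nlinarith)
  nlinarith [sq_two_mul_sub_mul_le hzy hy,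
    mul_le_mul_of_nonneg_right hx2 (show 0 ≤ y ^ 2 - z ^ 2 by nlinarith)]

lemma Dfun_comm : Dfun x y z = Dfun y x z := by
  unfold Dfun; ring

lemma Dfun_pos (hz : 0 < z) (hzx : z ≤ x) (hx : x < 2 * z) : 0 < Dfun y x z := by
  unfold Dfun
  nlinarith [mul_nonneg (sq_nonneg y) (show 0 ≤ x ^ 2 - z ^ 2 by nlinarith),
    mul_pos (pow_pos hz 2) (show 0 < 4 * z ^ 2 - x ^ 2 by nlinarith)]

lemma GRp_eq : GRp g x y z = (y - z) ^ 4 *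
    ((x ^ 2 - (y + 2 * z) ^ 2) * (Gfun g x y z / Dfun x y z)) *
      ((x ^ 2 - z ^ 2) / (x ^ 2 - y ^ 2)) := by
  simp only [GRp, div_eq_mul_inv, mul_inv]; ring

lemma GRm_eq : GRm g x y z = (y + z) ^ 4 *
    ((x ^ 2 - (y - 2 * z) ^ 2) * (Gfun g x y z / Dfun x y z)) *
      ((x ^ 2 - z ^ 2) / (x ^ 2 - y ^ 2)) := by
  simp only [GRm, div_eq_mul_inv, mul_inv]; ring

lemma GRp_nonneg (hG : Gfun g x y z ≤ 0) (hD : 0 ≤ Dfun x y z)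
    (hxyz : 0 ≤ (x ^ 2 - z ^ 2) / (x ^ 2 - y ^ 2)) (hx : x ^ 2 ≤ (y + 2 * z) ^ 2) :
    0 ≤ GRp g x y z := by
  rw [GRp_eq]
  exact mul_nonneg (mul_nonneg (by positivity)
    (mul_nonneg_of_nonpos_of_nonpos (by linarith) (div_nonpos_of_nonpos_of_nonneg hG hD))) hxyz

lemma GRm_nonneg (hG : Gfun g x y z ≤ 0) (hD : 0 ≤ Dfun x y z)
    (hxyz : 0 ≤ (x ^ 2 - z ^ 2) / (x ^ 2 - y ^ 2)) (hx : x ^ 2 ≤ (y - 2 * z) ^ 2) :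
    0 ≤ GRm g x y z := by
  rw [GRm_eq]
  exact mul_nonneg (mul_nonneg (by positivity)
    (mul_nonneg_of_nonpos_of_nonpos (by linarith) (div_nonpos_of_nonpos_of_nonneg hG hD))) hxyz

end

lemma memB.inv_mul_lt {b1 b2 : ℝ} (hB : memB b1 b2) :
    0 < (b1 * b2)⁻¹ ∧ (b1 * b2)⁻¹ < b2 ∧ b2 < b1 := by
  obtain ⟨h21, hlt, hpos⟩ := hB
  have hs : 0 < √b1 := inv_pos.mp hpos
  have hb1 : 0 < b1 := Real.sqrt_pos.mp hs
  have hb2 : 0 < b2 := hpos.trans hlt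
  have h1 : 1 < √b1 * b2 := (inv_lt_iff_one_lt_mul₀' hs).mp hlt
  refine ⟨by positivity, (inv_lt_iff_one_lt_mul₀' (by positivity)).mpr ?_, h21⟩
  calc 1 < (√b1 * b2) ^ 2 := one_lt_pow₀ h1 two_ne_zero
    _ = b1 * b2 * b2 := by rw [mul_pow, Real.sq_sqrt hb1.le]; ring

/-- On the existence region `B_I` (`b₁ ≤ 2b₂ − b₃`), the denominators
`(x²−y²)D(x,y,z)` are nonzero and `G^R₊`, `G^R₋` are nonnegative at the triples
`(b₁,b₃,b₂)` and `(b₃,b₁,b₂)`, so the momenta `N^R±` of the type-I ellipsoids are well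
defined. -/
theorem stmt_10 (g b1 b2 b3 : ℝ) (hg : 0 < g) (hB : memB b1 b2) (hb3 : b3 = (b1 * b2)⁻¹)
    (hI : b1 ≤ 2 * b2 - b3) :
    (b1 ^ 2 - b3 ^ 2) * Dfun b1 b3 b2 ≠ 0 ∧
    (b3 ^ 2 - b1 ^ 2) * Dfun b3 b1 b2 ≠ 0 ∧
    0 ≤ GRp g b1 b3 b2 ∧ 0 ≤ GRm g b1 b3 b2 ∧
    0 ≤ GRp g b3 b1 b2 ∧ 0 ≤ GRm g b3 b1 b2 ∧
    Real.sqrt (GRp g b1 b3 b2) ^ 2 = GRp g b1 b3 b2 ∧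
    Real.sqrt (GRm g b1 b3 b2) ^ 2 = GRm g b1 b3 b2 ∧
    Real.sqrt (GRp g b3 b1 b2) ^ 2 = GRp g b3 b1 b2 ∧
    Real.sqrt (GRm g b3 b1 b2) ^ 2 = GRm g b3 b1 b2 := by
  obtain ⟨h3, h32, h21⟩ := memB.inv_mul_lt hB
  rw [← hb3] at h3 h32
  have h12 : b1 < 2 * b2 := by linarith
  have hD : 0 < Dfun b3 b1 b2 := Dfun_pos (h3.trans h32) h21.le h12
  have hD' : 0 < Dfun b1 b3 b2 := by rwa [Dfun_comm]
  have hG₁ : Gfun g b1 b3 b2 ≤ 0 := Gfun_nonpos_of_sq_le hg.le (by nlinarith)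
  have hG₂ : Gfun g b3 b1 b2 ≤ 0 :=
    Gfun_nonpos_of_le_two_mul_sub hg.le h3.le h21.le (by linarith)
  have hr₁ : 0 ≤ (b1 ^ 2 - b2 ^ 2) / (b1 ^ 2 - b3 ^ 2) :=
    div_nonneg (by nlinarith) (by nlinarith)
  have hr₂ : 0 ≤ (b3 ^ 2 - b2 ^ 2) / (b3 ^ 2 - b1 ^ 2) :=
    div_nonneg_of_nonpos (by nlinarith) (by nlinarith)
  have hp₁ := GRp_nonneg hG₁ hD'.le hr₁ (by nlinarith)
  have hm₁ := GRm_nonneg hG₁ hD'.le hr₁ (by nlinarith)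
  have hp₂ := GRp_nonneg hG₂ hD.le hr₂ (by nlinarith)
  have hm₂ := GRm_nonneg hG₂ hD.le hr₂ (by nlinarith)
  exact ⟨mul_ne_zero (by nlinarith) hD'.ne', mul_ne_zero (by nlinarith) hD.ne',
    hp₁, hm₁, hp₂, hm₂, Real.sq_sqrt hp₁, Real.sq_sqrt hm₁, Real.sq_sqrt hp₂, Real.sq_sqrt hm₂⟩
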